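/- Let Λ = (λ_n) satisfy 0 = λ₀ < λ₁ < ⋯ with Σ 1/λ_n < ∞. For all ε > 0 and δ > 0 there exist natural numbers k < l such that the function f(t) = (t^{λ_k} − t^{λ_l}) / ‖t^{λ_k} − t^{λ_l}‖∞ on [0,1] satisfies f ≥ 0 on [0,1] and f(t) < δ for all t ∈ [0, 1−ε]. -/

import Mathlib

/-!
Strict monotonicity and `∑ 1/λₙ < ∞` force `λₙ → ∞`. Pick `k` so large that `t^{λ_k} < δ/2` on
`[0, 1-ε]`, and put `t₀ = (3/4)^{1/λ_k}`; since `t₀^{λ_l} → 0`, some `l > k` has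
`t₀^{λ_k} - t₀^{λ_l} > 1/2`. Then the sup norm exceeds `1/2`, so on `[0, 1-ε]` the normalized
difference is below `(δ/2) / (1/2) = δ`, while `λ_k ≤ λ_l` makes it nonnegative on `[0, 1]`.
-/

open Filter Real Set Topology

theorem StrictMono.tendsto_atTop_of_tendsto_inv_zero {f : ℕ → ℝ} (hf : StrictMono f)
    (h : Tendsto (fun n => (f n)⁻¹) atTop (𝓝 0)) : Tendsto f atTop atTop := by
  have hne : ∀ᶠ n in atTop, (f n)⁻¹ ≠ 0 := by
    rw [← Nat.cofinite_eq_atTop]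
    exact hf.injective.tendsto_cofinite.eventually (eventually_cofinite_ne 0) |>.mono
      fun n hn => inv_ne_zero hn
  have habs : Tendsto (fun n => |f n|) atTop atTop := by
    simpa [Function.comp_def] using tendsto_norm_cobounded_atTop.comp
      (tendsto_inv₀_nhdsNE_zero.comp (tendsto_nhdsWithin_iff.2 ⟨h, hne⟩))
  refine tendsto_atTop_atTop_of_monotone hf.monotone fun b => ?_
  obtain ⟨n, hn⟩ := (habs.eventually_ge_atTop (|b| + |f 0| + 1)).exists
  have h0n : f 0 ≤ f n := hf.monotone n.zero_le
  refine ⟨n, ?_⟩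
  -- `f n < 0` is impossible: it would give `|f n| ≤ |f 0|`, as `f 0 ≤ f n`.
  rcases abs_cases (f n) with ⟨hfn, -⟩ | ⟨hfn, -⟩
  · linarith [le_abs_self b, abs_nonneg (f 0)]
  · linarith [neg_abs_le (f 0), abs_nonneg b]

lemma eventually_forall_rpow_lt {Λ : ℕ → ℝ} (hΛ : Tendsto Λ atTop atTop) {ε η : ℝ}
    (hε : 0 < ε) (hη : 0 < η) : ∀ᶠ n in atTop, ∀ t ∈ Icc 0 (1 - ε), t ^ Λ n < η := by
  set c := max (1 - ε) 0
  have hc0 : -1 < c := by linarith [le_max_right (1 - ε) 0]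
  have hc1 : c < 1 := max_lt (by linarith) one_pos
  have hc : Tendsto (fun n => c ^ Λ n) atTop (𝓝 0) :=
    (tendsto_rpow_atTop_of_base_lt_one c hc0 hc1).comp hΛ
  filter_upwards [hc.eventually_lt_const hη, hΛ.eventually_ge_atTop 0] with n hcn hn t ht
  exact (rpow_le_rpow ht.1 (ht.2.trans (le_max_left _ _)) hn).trans_lt hcn

lemma eventually_exists_half_lt_rpow_sub_rpow {Λ : ℕ → ℝ} (hΛ : Tendsto Λ atTop atTop) {a : ℝ}
    (ha : 0 < a) : ∀ᶠ n in atTop, ∃ t ∈ Icc (0 : ℝ) 1, 1 / 2 < t ^ a - t ^ Λ n := by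
  set t₀ : ℝ := (3 / 4) ^ a⁻¹
  have ht₀ : t₀ ^ a = 3 / 4 := rpow_inv_rpow (by norm_num) ha.ne'
  have ht₀1 : t₀ < 1 := rpow_lt_one (by norm_num) (by norm_num) (inv_pos.2 ha)
  have ht₀0 : 0 ≤ t₀ := by positivity
  have hlim : Tendsto (fun n => t₀ ^ Λ n) atTop (𝓝 0) :=
    (tendsto_rpow_atTop_of_base_lt_one t₀ (by linarith) ht₀1).comp hΛ
  filter_upwards [hlim.eventually_lt_const (by norm_num : (0 : ℝ) < 1 / 4)] with n hn
  exact ⟨t₀, ⟨ht₀0, ht₀1.le⟩, by linarith⟩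

lemma bddAbove_abs_rpow_sub_rpow {a b : ℝ} (ha : 0 ≤ a) (hb : 0 ≤ b) :
    BddAbove ((fun t : ℝ => |t ^ a - t ^ b|) '' Icc 0 1) := by
  refine ⟨1, ?_⟩
  rintro _ ⟨t, ⟨ht0, ht1⟩, rfl⟩
  have := rpow_le_one ht0 ht1 ha
  have := rpow_le_one ht0 ht1 hb
  have := rpow_nonneg ht0 a
  have := rpow_nonneg ht0 b
  exact abs_le.2 ⟨by linarith, by linarith⟩

theorem stmt_19_general (Λ : ℕ → ℝ) (hmono : StrictMono Λ)
    (hsum : Summable fun n => (Λ n)⁻¹)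
    (ε δ : ℝ) (hε : 0 < ε) (hδ : 0 < δ) :
    ∃ k l : ℕ, k < l ∧
      ∀ M : ℝ, M = sSup ((fun t : ℝ => |t ^ Λ k - t ^ Λ l|) '' Set.Icc (0 : ℝ) 1) →
        (∀ t ∈ Set.Icc (0 : ℝ) 1, 0 ≤ (t ^ Λ k - t ^ Λ l) / M) ∧
        (∀ t ∈ Set.Icc (0 : ℝ) (1 - ε), (t ^ Λ k - t ^ Λ l) / M < δ) := by
  have hΛ := hmono.tendsto_atTop_of_tendsto_inv_zero hsum.tendsto_atTop_zero
  obtain ⟨k, hk, hsmall⟩ :=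
    ((hΛ.eventually_gt_atTop 0).and (eventually_forall_rpow_lt hΛ hε (half_pos hδ))).exists
  obtain ⟨l, hkl, t₀, ht₀, hspike⟩ :=
    ((eventually_gt_atTop k).and (eventually_exists_half_lt_rpow_sub_rpow hΛ hk)).exists
  have hkl' : Λ k ≤ Λ l := (hmono hkl).le
  refine ⟨k, l, hkl, fun M hM => ?_⟩
  have hM : 1 / 2 < M := hM ▸ lt_csSup_of_lt (bddAbove_abs_rpow_sub_rpow hk.le (hk.le.trans hkl'))
    ⟨t₀, ht₀, rfl⟩ (hspike.trans_le (le_abs_self _))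
  refine ⟨fun t ht => div_nonneg ?_ (by linarith), fun t ht => ?_⟩
  · exact sub_nonneg.2 (rpow_le_rpow_of_exponent_ge' ht.1 ht.2 hk.le hkl')
  · rw [div_lt_iff₀ (by linarith)]
    calc t ^ Λ k - t ^ Λ l ≤ t ^ Λ k := sub_le_self _ (rpow_nonneg ht.1 _)
      _ < δ / 2 := hsmall t ht
      _ < δ * M := by nlinarith

/-- Spike functions in Müntz spaces: if `0 = λ₀ < λ₁ < ⋯` with `∑ 1/λₙ < ∞`,
then for all `ε, δ > 0` there are `k < l` such that the normalized function
`f(t) = (t^{λ_k} - t^{λ_l}) / ‖t^{λ_k} - t^{λ_l}‖∞` satisfies `f ≥ 0` on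
`[0, 1]` and `f < δ` on `[0, 1 - ε]`. -/
theorem stmt_19 (Λ : ℕ → ℝ) (h0 : Λ 0 = 0) (hmono : StrictMono Λ)
    (hsum : Summable fun n => (Λ n)⁻¹)
    (ε δ : ℝ) (hε : 0 < ε) (hδ : 0 < δ) :
    ∃ k l : ℕ, k < l ∧
      ∀ M : ℝ, M = sSup ((fun t : ℝ => |t ^ Λ k - t ^ Λ l|) '' Set.Icc (0 : ℝ) 1) →
        (∀ t ∈ Set.Icc (0 : ℝ) 1, 0 ≤ (t ^ Λ k - t ^ Λ l) / M) ∧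
        (∀ t ∈ Set.Icc (0 : ℝ) (1 - ε), (t ^ Λ k - t ^ Λ l) / M < δ) :=
  stmt_19_general Λ hmono hsum ε δ hε hδ
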